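/- Under the hypotheses of the coefficient integral representation (polynomials $B_n$ with $c_2\sqrt{n}R^n \le |B_n| \le c_1\sqrt{n}R^n$ on a curve $L_R$ enclosing $0$, $R>1$, and $P_n = \sum_{k=0}^n a_k B_k$), one has the backward norm estimate $\|P_{n-1}\|_{L_R} \le C\,\|P_n\|_{L_R}$ for all large $n$, where $C = 1 + \frac{|L_R|}{2\pi d}\cdot\frac{c_1}{c_2}$ and $d = \min_{z\in L_R}|z|$. Consequently $\|P_{n-k}\|_{L_R} \le C^k \|P_n\|_{L_R}$ for $k \le n$. -/

import Mathlib

/-!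
The top coefficient of `Pₙ` is a residue. If every zero of `D` lies in the region enclosed by
the closed curve `γ` and `deg Q < deg D`, then `∫_γ Q/D dz = 2πi · coeff_{deg D - 1}(Q) / lc(D)`:
split off the principal part `c/(z - z₀)^(m+1)` at a zero `z₀` and induct on the degree, using
that a pole of order at least two has an antiderivative, so it integrates to zero over a closed
curve.
For `D = z Bₙ` and `Q = Pₙ` this reads `2πi aₙ = ∫_γ Pₙ/(z Bₙ) dz`, whence
`|aₙ| ≤ |L_R| ‖Pₙ‖ / (2π d c₂ √n Rⁿ)`. Since `P_{n-1} = Pₙ - aₙ Bₙ` and `|Bₙ| ≤ c₁ √n Rⁿ` on the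
curve, `‖P_{n-1}‖ ≤ (1 + |L_R| c₁ / (2π d c₂)) ‖Pₙ‖`, and iterating gives the bound for `P_{n-k}`.
-/

open Filter Polynomial intervalIntegral
open scoped Real
open Complex (I)

theorem le_pow_mul_of_forall_le_mul {α : Type*} [CommSemiring α] [PartialOrder α]
    [IsOrderedRing α] {M : ℕ → α} {c : α} {N : ℕ} (hc : 0 ≤ c)
    (h : ∀ n ≥ N, M (n - 1) ≤ c * M n) (n k : ℕ) (hk : N ≤ n - k) : M (n - k) ≤ c ^ k * M n := by
  induction k with
  | zero => simp
  | succ k ih =>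
    calc M (n - (k + 1)) = M (n - k - 1) := by rw [Nat.sub_sub]
      _ ≤ c * M (n - k) := h _ (hk.trans (by omega))
      _ ≤ c * (c ^ k * M n) := mul_le_mul_of_nonneg_left (ih (hk.trans (by omega))) hc
      _ = c ^ (k + 1) * M n := by ring

namespace Polynomial

section Semiring

variable {R : Type*} [Semiring R] {a : ℕ → R} {B : ℕ → R[X]}

theorem degree_sum_range_succ_C_mul_le (hdeg : ∀ k, (B k).natDegree = k) (n : ℕ) :
    (∑ k ∈ Finset.range (n + 1), C (a k) * B k).degree ≤ n := by
  refine (degree_sum_le _ _).trans (Finset.sup_le fun k hk => ?_)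
  calc (C (a k) * B k).degree ≤ (B k).degree := (degree_mul_le _ _).trans (by
        simpa using add_le_add_left degree_C_le _)
    _ ≤ k := degree_le_of_natDegree_le (hdeg k).le
    _ ≤ n := by exact_mod_cast Finset.mem_range_succ_iff.mp hk

theorem coeff_sum_range_succ_C_mul (hdeg : ∀ k, (B k).natDegree = k) (n : ℕ) :
    (∑ k ∈ Finset.range (n + 1), C (a k) * B k).coeff n = a n * (B n).leadingCoeff := by
  rw [finsetSum_coeff, Finset.sum_range_succ, Finset.sum_eq_zero fun k hk => by
    rw [coeff_C_mul, coeff_eq_zero_of_natDegree_lt ((hdeg k).trans_lt (Finset.mem_range.mp hk)),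
      mul_zero],
    zero_add, coeff_C_mul, leadingCoeff, hdeg]

end Semiring

section CommRing

variable {R : Type*} [CommRing R]

theorem coeff_X_sub_C_mul_of_degree_lt {z : R} {p : R[X]} {n : ℕ} (hp : p.degree < n) :
    ((X - C z) * p).coeff n = p.coeff (n - 1) := by
  rcases n with _ | n
  · simp [degree_eq_bot.mp (Nat.WithBot.lt_zero_iff.mp hp)]
  · rw [mul_comm, coeff_mul_X_sub_C, coeff_eq_zero_of_degree_lt hp]
    simp

theorem exists_eq_X_sub_C_pow_succ_mul {D : R[X]} {z : R} (hD : D ≠ 0) (hz : D.IsRoot z) :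
    ∃ m E, D = (X - C z) ^ (m + 1) * E ∧ E.eval z ≠ 0 := by
  obtain ⟨E, hDE, hE⟩ := D.exists_eq_pow_rootMultiplicity_mul_and_not_dvd hD z
  obtain ⟨m, hm⟩ := Nat.exists_eq_add_one_of_ne_zero ((rootMultiplicity_pos hD).mpr hz).ne'
  exact ⟨m, E, hm ▸ hDE, fun h => hE (dvd_iff_isRoot.mpr h)⟩

theorem degree_lt_of_X_sub_C_mul_add_C_mul [IsDomain R] {z c : R} {p q e : R[X]}
    (he : e.degree ≤ q.degree)
    (h : ((X - C z) * p + C c * e).degree < ((X - C z) * q).degree) : p.degree < q.degree := by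
  have hq : q ≠ 0 := by rintro rfl; simp at h
  have hq_lt : q.degree < ((X - C z) * q).degree := by
    rw [degree_mul, degree_X_sub_C, degree_eq_natDegree hq]
    exact_mod_cast Nat.lt_one_add_iff.mpr le_rfl
  have hce : (C c * e).degree < ((X - C z) * q).degree :=
    (C_mul' c e ▸ degree_smul_le c e).trans_lt (he.trans_lt hq_lt)
  have hp : ((X - C z) * p).degree < ((X - C z) * q).degree := by
    rw [← add_sub_cancel_right ((X - C z) * p) (C c * e)]
    exact (degree_sub_le _ _).trans_lt (max_lt h hce)
  rw [degree_mul, degree_mul, degree_X_sub_C] at hp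
  exact (WithBot.add_lt_add_iff_left WithBot.one_ne_bot).mp hp

end CommRing

section Field

variable {K : Type*} [Field K]

theorem exists_eq_X_sub_C_mul_add_C_mul (Q : K[X]) {E : K[X]} {z : K}
    (hE : E.eval z ≠ 0) : ∃ c q, Q = (X - C z) * q + C c * E := by
  set c := Q.eval z / E.eval z
  refine ⟨c, (Q - C c * E) /ₘ (X - C z), ?_⟩
  rw [mul_divByMonic_eq_iff_isRoot.mpr (by simp [c, hE]), sub_add_cancel]

theorem eval_div_eval_X_sub_C_pow_succ_mul {z c w : K} {m : ℕ}
    {q e : K[X]} (hw : w ≠ z) (he : e.eval w ≠ 0) :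
    ((X - C z) * q + C c * e).eval w / ((X - C z) ^ (m + 1) * e).eval w =
      c / (w - z) ^ (m + 1) + q.eval w / ((X - C z) ^ m * e).eval w := by
  have hwz : w - z ≠ 0 := sub_ne_zero.mpr hw
  simp only [eval_add, eval_mul, eval_pow, eval_sub, eval_X, eval_C]
  field_simp
  ring

/-- `p.coeff (q.natDegree - 1) / q.leadingCoeff` is the sum of the residues of `p / q` when
`deg p < deg q`; this is its additivity over the splitting
`((X - z) p + c e) / ((X - z)^(m+1) e) = c / (X - z)^(m+1) + p / ((X - z)^m e)`. -/
theorem coeff_div_leadingCoeff_X_sub_C_mul {z c : K} {m : ℕ} {p e : K[X]}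
    (he : e ≠ 0) (hp : p.degree < ((X - C z) ^ m * e).degree) :
    ((X - C z) * p + C c * e).coeff (((X - C z) * ((X - C z) ^ m * e)).natDegree - 1) /
        ((X - C z) * ((X - C z) ^ m * e)).leadingCoeff =
      p.coeff (((X - C z) ^ m * e).natDegree - 1) / ((X - C z) ^ m * e).leadingCoeff +
        if m = 0 then c else 0 := by
  set q := (X - C z) ^ m * e with hq_def
  have hq : q ≠ 0 := mul_ne_zero (pow_ne_zero _ (X_sub_C_ne_zero z)) he
  have hnat : ((X - C z) * q).natDegree - 1 = q.natDegree := by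
    rw [natDegree_mul (X_sub_C_ne_zero z) hq, natDegree_X_sub_C, add_tsub_cancel_left]
  have hlcq : q.leadingCoeff = e.leadingCoeff := by
    rw [hq_def, leadingCoeff_mul, leadingCoeff_pow, leadingCoeff_X_sub_C, one_pow, one_mul]
  have hlc : ((X - C z) * q).leadingCoeff = e.leadingCoeff := by
    rw [leadingCoeff_mul, leadingCoeff_X_sub_C, one_mul, hlcq]
  have hqdeg : q.natDegree = m + e.natDegree := by
    rw [hq_def, natDegree_mul (pow_ne_zero _ (X_sub_C_ne_zero z)) he, natDegree_pow,
      natDegree_X_sub_C, mul_one]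
  have hcoeff_e : e.coeff q.natDegree = if m = 0 then e.leadingCoeff else 0 := by
    split_ifs with hm
    · rw [hqdeg, hm, zero_add, leadingCoeff]
    · exact coeff_eq_zero_of_natDegree_lt (by omega)
  have hlc0 : e.leadingCoeff ≠ 0 := leadingCoeff_ne_zero.mpr he
  rw [hnat, hlc, hlcq, coeff_add, coeff_X_sub_C_mul_of_degree_lt
    (hp.trans_le degree_le_natDegree), coeff_C_mul, hcoeff_e]
  split_ifs
  · field_simp
  · simp

end Field

end Polynomial

theorem hasDerivAt_inv_sub_pow {z₀ z : ℂ} (hz : z ≠ z₀) (k : ℕ) :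
    HasDerivAt (fun w => -((k + 1 : ℕ) : ℂ)⁻¹ * ((w - z₀) ^ (k + 1))⁻¹)
      (1 / (z - z₀) ^ (k + 2)) z := by
  have hsub : z - z₀ ≠ 0 := sub_ne_zero.mpr hz
  have h : HasDerivAt (fun w => -((k + 1 : ℕ) : ℂ)⁻¹ * ((w - z₀) ^ (k + 1))⁻¹)
      (-((k + 1 : ℕ) : ℂ)⁻¹ * (-((k + 1 : ℕ) * (z - z₀) ^ k * 1) / ((z - z₀) ^ (k + 1)) ^ 2)) z :=
    ((((hasDerivAt_id z).sub_const z₀).pow (k + 1)).inv (pow_ne_zero _ hsub)).const_mul _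
  convert h using 1
  field_simp
  ring

noncomputable def supNormOnCurve (γ : ℝ → ℂ) (a b : ℝ) (f : ℂ → ℂ) : ℝ :=
  sSup ((fun t => ‖f (γ t)‖) '' Set.Icc a b)

section ClosedCurve

variable {γ : ℝ → ℂ} {a b : ℝ} {S : Set ℂ}

theorem integral_comp_mul_deriv_eq_zero {f f' : ℂ → ℂ} (hγ : Differentiable ℝ γ)
    (hclosed : γ a = γ b) (hf : ∀ t, HasDerivAt f (f' (γ t)) (γ t))
    (hint : Continuous fun t => f' (γ t) * deriv γ t) :
    ∫ t in a..b, f' (γ t) * deriv γ t = 0 := by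
  rw [integral_eq_sub_of_hasDerivAt (f := f ∘ γ)
    (fun t _ => (hf t).comp t (hγ t).hasDerivAt) (hint.intervalIntegrable a b)]
  simp [hclosed]

theorem integral_deriv_div_sub_pow_eq_zero (hγ : Differentiable ℝ γ)
    (hγ' : Continuous (deriv γ)) (hclosed : γ a = γ b) {z₀ : ℂ} (hz₀ : ∀ t, γ t ≠ z₀) (k : ℕ) :
    ∫ t in a..b, deriv γ t / (γ t - z₀) ^ (k + 2) = 0 := by
  have hcont : Continuous fun t => 1 / (γ t - z₀) ^ (k + 2) * deriv γ t :=
    (continuous_const.div ((hγ.continuous.sub continuous_const).pow _)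
      fun t => pow_ne_zero _ (sub_ne_zero.mpr (hz₀ t))).mul hγ'
  simpa [div_eq_inv_mul, mul_comm] using integral_comp_mul_deriv_eq_zero
    (f' := fun z => 1 / (z - z₀) ^ (k + 2)) hγ hclosed (fun t => hasDerivAt_inv_sub_pow (hz₀ t) k)
    hcont

theorem integral_deriv_div_sub_pow_of_mem (hγ : Differentiable ℝ γ)
    (hγ' : Continuous (deriv γ)) (hclosed : γ a = γ b) (hS : ∀ t, γ t ∉ S)
    (hwind : ∀ z ∈ S, ∫ t in a..b, deriv γ t / (γ t - z) = 2 * π * I) {z₀ : ℂ} (hz₀ : z₀ ∈ S)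
    (m : ℕ) : ∫ t in a..b, deriv γ t / (γ t - z₀) ^ (m + 1) = if m = 0 then 2 * π * I else 0 := by
  rcases m with _ | k
  · simpa using hwind z₀ hz₀
  · exact integral_deriv_div_sub_pow_eq_zero hγ hγ' hclosed (fun t h => hS t (h ▸ hz₀)) k

theorem continuous_deriv_mul_eval_div_eval (hγ : Differentiable ℝ γ)
    (hγ' : Continuous (deriv γ)) (hS : ∀ t, γ t ∉ S) {D Q : ℂ[X]}
    (hroots : ∀ z, D.IsRoot z → z ∈ S) :
    Continuous fun t => deriv γ t * Q.eval (γ t) / D.eval (γ t) :=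
  (hγ'.mul (Q.continuous.comp hγ.continuous)).div (D.continuous.comp hγ.continuous)
    fun t h => hS t (hroots _ h)

theorem integral_deriv_mul_eval_div_eval (hγ : Differentiable ℝ γ)
    (hγ' : Continuous (deriv γ)) (hclosed : γ a = γ b) (hS : ∀ t, γ t ∉ S)
    (hwind : ∀ z ∈ S, ∫ t in a..b, deriv γ t / (γ t - z) = 2 * π * I) {D Q : ℂ[X]}
    (hroots : ∀ z, D.IsRoot z → z ∈ S) (hQD : Q.degree < D.degree) :
    ∫ t in a..b, deriv γ t * Q.eval (γ t) / D.eval (γ t) =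
      2 * π * I * (Q.coeff (D.natDegree - 1) / D.leadingCoeff) := by
  induction hd : D.natDegree using Nat.strong_induction_on generalizing D Q with
  | _ d ih =>
  have hD : D ≠ 0 := ne_zero_of_degree_gt hQD
  rcases Nat.eq_zero_or_pos d with rfl | hd_pos
  · rw [degree_eq_natDegree hD, hd] at hQD
    simp [degree_eq_bot.mp (Nat.WithBot.lt_zero_iff.mp hQD)]
  obtain ⟨z₀, hz₀⟩ := Complex.exists_root (natDegree_pos_iff_degree_pos.mp (hd ▸ hd_pos))
  obtain ⟨m, E, hDE, hEz₀⟩ := exists_eq_X_sub_C_pow_succ_mul hD hz₀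
  obtain ⟨c, Qt, hQ⟩ := exists_eq_X_sub_C_mul_add_C_mul Q hEz₀
  set Dt := (X - C z₀) ^ m * E with hDt
  have hDDt : D = (X - C z₀) * Dt := by rw [hDE, pow_succ']; ring
  have hE : E ≠ 0 := by rintro rfl; simp at hEz₀
  have hEDt : E.degree ≤ Dt.degree := by
    rw [hDt, degree_mul, degree_pow, degree_X_sub_C]
    exact le_add_of_nonneg_left (by simp)
  have hQt : Qt.degree < Dt.degree := by
    rw [hQ, hDDt] at hQD
    exact degree_lt_of_X_sub_C_mul_add_C_mul hEDt hQD
  have hDt_roots : ∀ z, Dt.IsRoot z → z ∈ S := fun z hz =>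
    hroots z (by rw [hDDt, IsRoot, eval_mul, hz.eq_zero, mul_zero])
  have hz₀S : z₀ ∈ S := hroots z₀ hz₀
  have hoff : ∀ t, γ t ≠ z₀ := fun t h => hS t (h ▸ hz₀S)
  have hsplit : ∀ t, deriv γ t * Q.eval (γ t) / D.eval (γ t) =
      c * (deriv γ t / (γ t - z₀) ^ (m + 1)) + deriv γ t * Qt.eval (γ t) / Dt.eval (γ t) := by
    intro t
    have hEt : E.eval (γ t) ≠ 0 := fun h =>
      hS t (hroots _ (by rw [IsRoot, hDE, eval_mul, h, mul_zero]))
    rw [mul_div_assoc, hQ, hDE, eval_div_eval_X_sub_C_pow_succ_mul (hoff t) hEt]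
    ring
  have hpole_cont : Continuous fun t => c * (deriv γ t / (γ t - z₀) ^ (m + 1)) :=
    continuous_const.mul (hγ'.div ((hγ.continuous.sub continuous_const).pow _)
      fun t => pow_ne_zero _ (sub_ne_zero.mpr (hoff t)))
  have hDt_deg : Dt.natDegree < d := by
    rw [← hd, hDDt, natDegree_mul (X_sub_C_ne_zero z₀) (ne_zero_of_degree_gt hQt),
      natDegree_X_sub_C]
    omega
  rw [integral_congr fun t _ => hsplit t, integral_add (hpole_cont.intervalIntegrable a b)
    ((continuous_deriv_mul_eval_div_eval hγ hγ' hS hDt_roots).intervalIntegrable a b),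
    integral_const_mul, integral_deriv_div_sub_pow_of_mem hγ hγ' hclosed hS hwind hz₀S,
    ih _ hDt_deg hDt_roots hQt rfl, ← hd, hQ, hDDt, hDt, coeff_div_leadingCoeff_X_sub_C_mul hE
    (hDt ▸ hQt)]
  split_ifs <;> ring

theorem integral_deriv_mul_eval_div_mul_eval (hγ : Differentiable ℝ γ)
    (hγ' : Continuous (deriv γ)) (hclosed : γ a = γ b) (hS : ∀ t, γ t ∉ S)
    (hwind : ∀ z ∈ S, ∫ t in a..b, deriv γ t / (γ t - z) = 2 * π * I) (h0 : (0 : ℂ) ∈ S)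
    {B Q : ℂ[X]} (hB : B ≠ 0)
    (hroots : ∀ z, B.IsRoot z → z ∈ S) (hQ : Q.degree ≤ B.degree) :
    ∫ t in a..b, deriv γ t * Q.eval (γ t) / (γ t * B.eval (γ t)) =
      2 * π * I * (Q.coeff B.natDegree / B.leadingCoeff) := by
  have hroots' : ∀ z, (X * B).IsRoot z → z ∈ S := fun z hz => by
    rcases (by simpa using hz : z = 0 ∨ B.eval z = 0) with rfl | h
    exacts [h0, hroots z h]
  have hQ' : Q.degree < (X * B).degree := by
    rw [degree_mul, degree_X, degree_eq_natDegree hB] at *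
    exact hQ.trans_lt (by exact_mod_cast Nat.lt_one_add_iff.mpr le_rfl)
  simpa [natDegree_mul X_ne_zero hB] using
    integral_deriv_mul_eval_div_eval hγ hγ' hclosed hS hwind hroots' hQ'

theorem norm_le_supNormOnCurve (hγ : Continuous γ) {f : ℂ → ℂ} (hf : Continuous f) {t : ℝ}
    (ht : t ∈ Set.Icc a b) : ‖f (γ t)‖ ≤ supNormOnCurve γ a b f :=
  le_csSup (isCompact_Icc.image (hf.comp hγ).norm).bddAbove (Set.mem_image_of_mem _ ht)

theorem supNormOnCurve_le (hab : a ≤ b) {f : ℂ → ℂ} {K : ℝ}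
    (h : ∀ t ∈ Set.Icc a b, ‖f (γ t)‖ ≤ K) : supNormOnCurve γ a b f ≤ K :=
  csSup_le ((Set.nonempty_Icc.mpr hab).image _) (Set.forall_mem_image.mpr h)

theorem sInf_norm_image_Icc_le (hγ : Continuous γ) {t : ℝ} (ht : t ∈ Set.Icc a b) :
    sInf ((fun t => ‖γ t‖) '' Set.Icc a b) ≤ ‖γ t‖ :=
  csInf_le (isCompact_Icc.image hγ.norm).bddBelow (Set.mem_image_of_mem _ ht)

theorem sInf_norm_image_Icc_pos (hγ : Continuous γ) (hab : a ≤ b) (h0 : ∀ t, γ t ≠ 0) :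
    0 < sInf ((fun t => ‖γ t‖) '' Set.Icc a b) := by
  obtain ⟨t, -, ht⟩ :=
    (isCompact_Icc.image hγ.norm).sInf_mem ((Set.nonempty_Icc.mpr hab).image _)
  exact ht ▸ norm_pos_iff.mpr (h0 t)

theorem norm_coeff_div_leadingCoeff_le (hab : a ≤ b) (hγ : Differentiable ℝ γ)
    (hγ' : Continuous (deriv γ)) (hclosed : γ a = γ b) (hS : ∀ t, γ t ∉ S)
    (hwind : ∀ z ∈ S, ∫ t in a..b, deriv γ t / (γ t - z) = 2 * π * I) (h0 : (0 : ℂ) ∈ S)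
    {B Q : ℂ[X]} (hroots : ∀ z, B.IsRoot z → z ∈ S) (hQ : Q.degree ≤ B.degree) {ℓ : ℝ}
    (hℓ : 0 < ℓ) (hlow : ∀ t ∈ Set.Icc a b, ℓ ≤ ‖B.eval (γ t)‖) :
    ‖Q.coeff B.natDegree / B.leadingCoeff‖ ≤
      (∫ t in a..b, ‖deriv γ t‖) / (2 * π * sInf ((fun t => ‖γ t‖) '' Set.Icc a b)) *
        (supNormOnCurve γ a b Q.eval / ℓ) := by
  have hB : B ≠ 0 := by
    rintro rfl
    simpa using hℓ.trans_le (hlow a (Set.left_mem_Icc.mpr hab))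
  set δ := sInf ((fun t => ‖γ t‖) '' Set.Icc a b)
  set M := supNormOnCurve γ a b Q.eval
  have hδ : 0 < δ := sInf_norm_image_Icc_pos hγ.continuous hab fun t h => hS t (h ▸ h0)
  have hpoint : ∀ t ∈ Set.Icc a b,
      ‖deriv γ t * Q.eval (γ t) / (γ t * B.eval (γ t))‖ ≤ ‖deriv γ t‖ * (M / (δ * ℓ)) := by
    intro t ht
    rw [norm_div, norm_mul, norm_mul, mul_div_assoc]
    have hM : ‖Q.eval (γ t)‖ ≤ M := norm_le_supNormOnCurve hγ.continuous Q.continuous ht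
    gcongr
    exacts [(norm_nonneg _).trans hM, sInf_norm_image_Icc_le hγ.continuous ht, hlow t ht]
  have hint : ‖2 * π * I * (Q.coeff B.natDegree / B.leadingCoeff)‖ ≤
      (∫ t in a..b, ‖deriv γ t‖) * (M / (δ * ℓ)) := by
    rw [← integral_deriv_mul_eval_div_mul_eval hγ hγ' hclosed hS hwind h0 hB hroots hQ,
      ← integral_mul_const]
    exact norm_integral_le_of_norm_le hab
      (Filter.Eventually.of_forall fun t ht => hpoint t (Set.Ioc_subset_Icc_self ht))
      ((hγ'.norm.mul continuous_const).intervalIntegrable a b)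
  rw [norm_mul, norm_mul, norm_mul, Complex.norm_ofNat, Complex.norm_real, Complex.norm_I,
    Real.norm_of_nonneg Real.pi_pos.le, mul_one] at hint
  rw [div_mul_div_comm, le_div_iff₀ (by positivity)]
  calc _ = 2 * π * ‖Q.coeff B.natDegree / B.leadingCoeff‖ * (δ * ℓ) := by ring
    _ ≤ (∫ t in a..b, ‖deriv γ t‖) * (M / (δ * ℓ)) * (δ * ℓ) := by gcongr
    _ = _ := by field_simp

theorem supNormOnCurve_sub_C_mul_le (hab : a ≤ b) (hγ : Differentiable ℝ γ)
    (hγ' : Continuous (deriv γ)) (hclosed : γ a = γ b) (hS : ∀ t, γ t ∉ S)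
    (hwind : ∀ z ∈ S, ∫ t in a..b, deriv γ t / (γ t - z) = 2 * π * I) (h0 : (0 : ℂ) ∈ S)
    {B Q : ℂ[X]} (hroots : ∀ z, B.IsRoot z → z ∈ S) (hQ : Q.degree ≤ B.degree)
    {c₁ c₂ s : ℝ} (hc₂ : 0 < c₂) (hs : 0 < s)
    (hlow : ∀ t ∈ Set.Icc a b, c₂ * s ≤ ‖B.eval (γ t)‖)
    (hup : ∀ t ∈ Set.Icc a b, ‖B.eval (γ t)‖ ≤ c₁ * s) :
    supNormOnCurve γ a b (Q - C (Q.coeff B.natDegree / B.leadingCoeff) * B).eval ≤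
      (1 + (∫ t in a..b, ‖deriv γ t‖) / (2 * π * sInf ((fun t => ‖γ t‖) '' Set.Icc a b)) *
        (c₁ / c₂)) * supNormOnCurve γ a b Q.eval := by
  set α := Q.coeff B.natDegree / B.leadingCoeff
  set K := (∫ t in a..b, ‖deriv γ t‖) / (2 * π * sInf ((fun t => ‖γ t‖) '' Set.Icc a b))
  set M := supNormOnCurve γ a b Q.eval
  have hα : ‖α‖ ≤ K * (M / (c₂ * s)) :=
    norm_coeff_div_leadingCoeff_le hab hγ hγ' hclosed hS hwind h0 hroots hQ (by positivity) hlow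
  refine supNormOnCurve_le hab fun t ht => ?_
  have hc₁s : 0 ≤ c₁ * s := (norm_nonneg _).trans (hup t ht)
  calc ‖(Q - C α * B).eval (γ t)‖ = ‖Q.eval (γ t) - α * B.eval (γ t)‖ := by simp
    _ ≤ M + ‖α‖ * (c₁ * s) := by
      refine (norm_sub_le _ _).trans (add_le_add ?_ ?_)
      · exact norm_le_supNormOnCurve hγ.continuous Q.continuous ht
      · rw [norm_mul]
        exact mul_le_mul_of_nonneg_left (hup t ht) (norm_nonneg _)
    _ ≤ M + K * (M / (c₂ * s)) * (c₁ * s) := by gcongr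
    _ = (1 + K * (c₁ / c₂)) * M := by field_simp

theorem supNormOnCurve_sum_range_le (hab : a ≤ b) (hγ : Differentiable ℝ γ)
    (hγ' : Continuous (deriv γ)) (hclosed : γ a = γ b) (hS : ∀ t, γ t ∉ S)
    (hwind : ∀ z ∈ S, ∫ t in a..b, deriv γ t / (γ t - z) = 2 * π * I) (h0 : (0 : ℂ) ∈ S)
    {α : ℕ → ℂ} {B : ℕ → ℂ[X]} (hdeg : ∀ k, (B k).natDegree = k) {n : ℕ}
    (hroots : ∀ z, (B (n + 1)).IsRoot z → z ∈ S) {c₁ c₂ s : ℝ} (hc₂ : 0 < c₂) (hs : 0 < s)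
    (hlow : ∀ t ∈ Set.Icc a b, c₂ * s ≤ ‖(B (n + 1)).eval (γ t)‖)
    (hup : ∀ t ∈ Set.Icc a b, ‖(B (n + 1)).eval (γ t)‖ ≤ c₁ * s) :
    supNormOnCurve γ a b (∑ k ∈ Finset.range (n + 1), C (α k) * B k).eval ≤
      (1 + (∫ t in a..b, ‖deriv γ t‖) / (2 * π * sInf ((fun t => ‖γ t‖) '' Set.Icc a b)) *
        (c₁ / c₂)) * supNormOnCurve γ a b (∑ k ∈ Finset.range (n + 2), C (α k) * B k).eval := by
  have hB : B (n + 1) ≠ 0 := fun h => by simpa [h] using hdeg (n + 1)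
  have hα : α (n + 1) = (∑ k ∈ Finset.range (n + 2), C (α k) * B k).coeff (B (n + 1)).natDegree /
      (B (n + 1)).leadingCoeff := by
    rw [hdeg, coeff_sum_range_succ_C_mul hdeg, mul_div_cancel_right₀ _
      (leadingCoeff_ne_zero.mpr hB)]
  have hdeg_sum : (∑ k ∈ Finset.range (n + 2), C (α k) * B k).degree ≤ (B (n + 1)).degree := by
    rw [degree_eq_natDegree hB, hdeg]
    exact degree_sum_range_succ_C_mul_le hdeg _
  have hsplit : ∑ k ∈ Finset.range (n + 1), C (α k) * B k =
      ∑ k ∈ Finset.range (n + 2), C (α k) * B k - C (α (n + 1)) * B (n + 1) := by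
    rw [Finset.sum_range_succ _ (n + 1), add_sub_cancel_right]
  rw [hsplit, hα]
  exact supNormOnCurve_sub_C_mul_le hab hγ hγ' hclosed hS hwind h0 hroots hdeg_sum hc₂ hs hlow hup

end ClosedCurve

theorem backward_norm_estimate_general
    (a : ℕ → ℂ) (B : ℕ → Polynomial ℂ) (P : ℕ → Polynomial ℂ)
    (hP : ∀ n, P n = ∑ k ∈ Finset.range (n + 1), Polynomial.C (a k) * B k)
    (hdeg : ∀ n, (B n).natDegree = n)
    (γ : ℝ → ℂ) (hγ : Differentiable ℝ γ) (hγ' : Continuous (deriv γ))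
    (hclosed : γ 0 = γ (2 * Real.pi))
    (Int : Set ℂ) (hInt0 : (0 : ℂ) ∈ Int)
    (hcurve : ∀ t : ℝ, γ t ∉ Int)
    (hwind1 : ∀ z ∈ Int,
      (1 / (2 * Real.pi * Complex.I)) *
        ∫ t in (0:ℝ)..(2 * Real.pi), deriv γ t / (γ t - z) = 1)
    (R c₁ c₂ : ℝ) (hR : 1 < R) (hc₂ : 0 < c₂)
    (hlow : ∀ (n : ℕ) (t : ℝ),
      c₂ * Real.sqrt n * R ^ n ≤ ‖(B n).eval (γ t)‖)
    (hup : ∀ (n : ℕ) (t : ℝ),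
      ‖(B n).eval (γ t)‖ ≤ c₁ * Real.sqrt n * R ^ n)
    (hzeros : ∀ᶠ n in atTop, ∀ z : ℂ, (B n).IsRoot z → z ∈ Int) :
    ∃ N : ℕ,
      (∀ n ≥ N,
        sSup ((fun t => ‖(P (n - 1)).eval (γ t)‖) '' Set.Icc (0:ℝ) (2 * Real.pi)) ≤
          (1 + ((∫ t in (0:ℝ)..(2 * Real.pi), ‖deriv γ t‖) /
              (2 * Real.pi * sInf ((fun t => ‖γ t‖) '' Set.Icc (0:ℝ) (2 * Real.pi)))) *
            (c₁ / c₂)) *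
          sSup ((fun t => ‖(P n).eval (γ t)‖) '' Set.Icc (0:ℝ) (2 * Real.pi))) ∧
      (∀ n : ℕ, ∀ k ≤ n, N ≤ n - k →
        sSup ((fun t => ‖(P (n - k)).eval (γ t)‖) '' Set.Icc (0:ℝ) (2 * Real.pi)) ≤
          (1 + ((∫ t in (0:ℝ)..(2 * Real.pi), ‖deriv γ t‖) /
              (2 * Real.pi * sInf ((fun t => ‖γ t‖) '' Set.Icc (0:ℝ) (2 * Real.pi)))) *
            (c₁ / c₂)) ^ k *
          sSup ((fun t => ‖(P n).eval (γ t)‖) '' Set.Icc (0:ℝ) (2 * Real.pi))) := by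
  obtain ⟨N₀, hN₀⟩ := eventually_atTop.mp hzeros
  have h2π : (0 : ℝ) ≤ 2 * π := Real.two_pi_pos.le
  have hwind : ∀ z ∈ Int, ∫ t in (0:ℝ)..(2 * π), deriv γ t / (γ t - z) = 2 * π * I := by
    intro z hz
    have h := hwind1 z hz
    rwa [one_div, inv_mul_eq_iff_eq_mul₀ (by simp [Real.pi_ne_zero]), mul_one] at h
  have hc₁ : 0 ≤ c₁ := by
    have h := (norm_nonneg _).trans (hup 1 0)
    simp only [Nat.cast_one, Real.sqrt_one, mul_one, pow_one] at h
    exact (mul_nonneg_iff_of_pos_right (by linarith)).mp h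
  have hδ := sInf_norm_image_Icc_pos hγ.continuous h2π fun t h => hcurve t (h ▸ hInt0)
  set K := 1 + ((∫ t in (0:ℝ)..(2 * π), ‖deriv γ t‖) /
      (2 * π * sInf ((fun t => ‖γ t‖) '' Set.Icc (0:ℝ) (2 * π)))) * (c₁ / c₂)
  have hK : 0 ≤ K := by
    have : 0 ≤ ∫ t in (0:ℝ)..(2 * π), ‖deriv γ t‖ :=
      integral_nonneg h2π fun t _ => norm_nonneg _
    positivity
  have hstep : ∀ n ≥ max N₀ 1, supNormOnCurve γ 0 (2 * π) (P (n - 1)).eval ≤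
      K * supNormOnCurve γ 0 (2 * π) (P n).eval := by
    intro n hn
    obtain ⟨m, rfl⟩ := Nat.exists_eq_add_one_of_ne_zero (by omega : n ≠ 0)
    rw [Nat.add_sub_cancel, hP, hP]
    exact supNormOnCurve_sum_range_le h2π hγ hγ' hclosed hcurve hwind hInt0 hdeg
      (hN₀ _ (le_of_max_le_left hn)) hc₂ (by positivity)
      (fun t _ => mul_assoc c₂ _ _ ▸ hlow _ t) (fun t _ => mul_assoc c₁ _ _ ▸ hup _ t)
  exact ⟨max N₀ 1, hstep, fun n k _ hk =>
    le_pow_mul_of_forall_le_mul (M := fun n => supNormOnCurve γ 0 (2 * π) (P n).eval) hK hstep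
      n k hk⟩

/-- Backward norm estimate: in the setting of the coefficient integral representation
(curve `L_R` enclosing `0`, `c₂√n Rⁿ ≤ |B_n| ≤ c₁√n Rⁿ` on the curve, zeros of `B_n`
eventually inside, `P_n = ∑_{k ≤ n} a_k B_k`), one has
`‖P_{n-1}‖_{L_R} ≤ C ‖P_n‖_{L_R}` for all large `n`, where
`C = 1 + (|L_R|/(2π d))(c₁/c₂)`; consequently `‖P_{n-k}‖_{L_R} ≤ C^k ‖P_n‖_{L_R}`. -/
theorem backward_norm_estimate
    (a : ℕ → ℂ) (B : ℕ → Polynomial ℂ) (P : ℕ → Polynomial ℂ)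
    (hP : ∀ n, P n = ∑ k ∈ Finset.range (n + 1), Polynomial.C (a k) * B k)
    (hdeg : ∀ n, (B n).natDegree = n)
    (γ : ℝ → ℂ) (hγ : Differentiable ℝ γ) (hγ' : Continuous (deriv γ))
    (hclosed : γ 0 = γ (2 * Real.pi))
    (Int : Set ℂ) (hInt0 : (0 : ℂ) ∈ Int)
    (hcurve : ∀ t : ℝ, γ t ∉ Int)
    (hwind1 : ∀ z ∈ Int,
      (1 / (2 * Real.pi * Complex.I)) *
        ∫ t in (0:ℝ)..(2 * Real.pi), deriv γ t / (γ t - z) = 1)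
    (hwind0 : ∀ z : ℂ, z ∉ Int → z ∉ Set.range γ →
      (1 / (2 * Real.pi * Complex.I)) *
        ∫ t in (0:ℝ)..(2 * Real.pi), deriv γ t / (γ t - z) = 0)
    (R c₁ c₂ : ℝ) (hR : 1 < R) (hc₂ : 0 < c₂) (hc₁₂ : c₂ ≤ c₁)
    (hlow : ∀ (n : ℕ) (t : ℝ),
      c₂ * Real.sqrt n * R ^ n ≤ ‖(B n).eval (γ t)‖)
    (hup : ∀ (n : ℕ) (t : ℝ),
      ‖(B n).eval (γ t)‖ ≤ c₁ * Real.sqrt n * R ^ n)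
    (hzeros : ∀ᶠ n in atTop, ∀ z : ℂ, (B n).IsRoot z → z ∈ Int) :
    ∃ N : ℕ,
      (∀ n ≥ N,
        sSup ((fun t => ‖(P (n - 1)).eval (γ t)‖) '' Set.Icc (0:ℝ) (2 * Real.pi)) ≤
          (1 + ((∫ t in (0:ℝ)..(2 * Real.pi), ‖deriv γ t‖) /
              (2 * Real.pi * sInf ((fun t => ‖γ t‖) '' Set.Icc (0:ℝ) (2 * Real.pi)))) *
            (c₁ / c₂)) *
          sSup ((fun t => ‖(P n).eval (γ t)‖) '' Set.Icc (0:ℝ) (2 * Real.pi))) ∧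
      (∀ n : ℕ, ∀ k ≤ n, N ≤ n - k →
        sSup ((fun t => ‖(P (n - k)).eval (γ t)‖) '' Set.Icc (0:ℝ) (2 * Real.pi)) ≤
          (1 + ((∫ t in (0:ℝ)..(2 * Real.pi), ‖deriv γ t‖) /
              (2 * Real.pi * sInf ((fun t => ‖γ t‖) '' Set.Icc (0:ℝ) (2 * Real.pi)))) *
            (c₁ / c₂)) ^ k *
          sSup ((fun t => ‖(P n).eval (γ t)‖) '' Set.Icc (0:ℝ) (2 * Real.pi))) :=
  backward_norm_estimate_general a B P hP hdeg γ hγ hγ' hclosed Int hInt0 hcurve hwind1 R c₁ c₂ hR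
    hc₂ hlow hup hzeros
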